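/- arXiv:2507.10550 — 3 statements merged into one kernel-verified Lean document; each statement's English description precedes it below -/
import Mathlib

section
/- Let p be a natural number and let c_p, d_p ∈ ℕ with c_p ≥ 1 and c_p + d_p ≤ p. Then for all d, n ∈ ℕ, |1/(3^d * 5^n) - 1/(2^{c_p} * 3^{d_p} * 5^p)| ≥ 1/30^(3*p), where the expression is evaluated in ℚ. -/
/-! Both numbers are reciprocals of integers `a = 3^d 5^n` and `b = 2^cp 3^dp 5^p`, which differ
by parity. For distinct positive integers, `|1/a - 1/b| ≥ 1/(2b²)`: either `a ≤ 2b` and the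
difference is `|b - a|/(ab) ≥ 1/(ab)`, or `a > 2b` and it exceeds `1/(2b)`. Finally
`b ≤ 15^p`, and `2 · 15^(2p) ≤ 30^(3p)`. -/

theorem inv_two_mul_sq_le_abs_inv_sub_inv {K : Type*} [Field K] [LinearOrder K]
    [IsStrictOrderedRing K] {a b : ℕ} (ha : 0 < a) (hb : 0 < b) (hab : a ≠ b) :
    (2 * (b : K) ^ 2)⁻¹ ≤ |(a : K)⁻¹ - (b : K)⁻¹| := by
  have ha' : (0 : K) < a := by exact_mod_cast ha
  have hb' : (1 : K) ≤ b := by exact_mod_cast hb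
  rcases le_or_gt a (2 * b) with hle | hgt
  · have hdist : (1 : K) ≤ |(b : K) - a| := by
      have : (1 : ℤ) ≤ |(b : ℤ) - a| :=
        Int.one_le_abs (sub_ne_zero.mpr (by exact_mod_cast hab.symm))
      exact_mod_cast this
    have hle' : (a : K) ≤ 2 * b := by exact_mod_cast hle
    calc (2 * (b : K) ^ 2)⁻¹ ≤ (a * b : K)⁻¹ := inv_anti₀ (by positivity) (by nlinarith)
      _ ≤ |(b : K) - a| / (a * b) := by rw [inv_eq_one_div]; gcongr
      _ = |(a : K)⁻¹ - (b : K)⁻¹| := by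
        rw [inv_sub_inv ha'.ne' (by positivity), abs_div,
          abs_of_pos (by positivity : (0 : K) < a * b)]
  · have hgt' : 2 * (b : K) < a := by exact_mod_cast hgt
    calc (2 * (b : K) ^ 2)⁻¹ ≤ (2 * b : K)⁻¹ := inv_anti₀ (by positivity) (by nlinarith)
      _ = (b : K)⁻¹ - (2 * b : K)⁻¹ := by field_simp; ring
      _ ≤ (b : K)⁻¹ - (a : K)⁻¹ := by gcongr
      _ ≤ |(a : K)⁻¹ - (b : K)⁻¹| := by rw [abs_sub_comm]; exact le_abs_self _

theorem two_pow_mul_three_pow_mul_five_pow_le_fifteen_pow {c e p : ℕ} (h : c + e ≤ p) :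
    2 ^ c * 3 ^ e * 5 ^ p ≤ 15 ^ p :=
  calc 2 ^ c * 3 ^ e * 5 ^ p ≤ 3 ^ c * 3 ^ e * 5 ^ p := by gcongr; norm_num
    _ = 3 ^ (c + e) * 5 ^ p := by rw [pow_add]
    _ ≤ 3 ^ p * 5 ^ p := by gcongr; norm_num
    _ = 15 ^ p := by rw [← mul_pow]; norm_num

theorem two_mul_sq_fifteen_pow_le_thirty_pow {p : ℕ} (hp : 1 ≤ p) :
    2 * (15 ^ p) ^ 2 ≤ 30 ^ (3 * p) :=
  calc 2 * (15 ^ p) ^ 2 = 2 * 15 ^ (2 * p) := by rw [← pow_mul, mul_comm p]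
    _ ≤ 2 ^ (3 * p) * 15 ^ (3 * p) := by
        gcongr
        · exact le_self_pow₀ (by norm_num) (by omega)
        · norm_num
        · omega
    _ = 30 ^ (3 * p) := by rw [← mul_pow]; norm_num

theorem stmt_4 (p cp dp : ℕ) (hcp : 1 ≤ cp) (hle : cp + dp ≤ p) (d n : ℕ) :
    |1 / ((3 : ℚ) ^ d * 5 ^ n) - 1 / ((2 : ℚ) ^ cp * 3 ^ dp * 5 ^ p)| ≥
      1 / 30 ^ (3 * p) := by
  set a := 3 ^ d * 5 ^ n
  set b := 2 ^ cp * 3 ^ dp * 5 ^ p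
  have ha_odd : Odd a := (Odd.pow (by decide)).mul (Odd.pow (by decide))
  have hb_even : Even b := ((Nat.even_pow.mpr ⟨even_two, by omega⟩).mul_right _).mul_right _
  have hab : a ≠ b := fun h => Nat.not_even_iff_odd.mpr ha_odd (h ▸ hb_even)
  have hb_le : b ≤ 15 ^ p := two_pow_mul_three_pow_mul_five_pow_le_fifteen_pow hle
  have hbound : 2 * b ^ 2 ≤ 30 ^ (3 * p) :=
    le_trans (by gcongr) (two_mul_sq_fifteen_pow_le_thirty_pow (by omega))
  have key := inv_two_mul_sq_le_abs_inv_sub_inv (K := ℚ)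
    (by positivity : 0 < a) (by positivity : 0 < b) hab
  push_cast [a, b] at key hbound
  simp only [one_div, ge_iff_le]
  refine le_trans ?_ key
  gcongr
  exact_mod_cast hbound
end

section
/- Let k ∈ {1,2}, let μ > 0 be real, let P ≥ 2, let (k_q)_{q=1}^{P-1} be a sequence with each k_q ∈ {4-k, 5}, and let (a_p)_{p=1}^{P} be real numbers with a_P = 1 and |a_{q+1} - k_q * a_q| < μ for all 1 ≤ q ≤ P-1. Then |∏_{q=1}^{P-1} (1/k_{P-q}) - a_1| < μ. -/
open Finset

lemma abs_add_div_lt {m e δ μ : ℝ} (hm : 2 ≤ m) (he : |e| ≤ μ) (hδ : |δ| < μ) :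
    |(e + δ) / m| < μ := by
  rw [abs_div, abs_of_pos (show 0 < m by linarith), div_lt_iff₀ (by linarith)]
  calc |e + δ| ≤ |e| + |δ| := abs_add_le e δ
    _ < 2 * μ := by linarith
    _ ≤ μ * m := by nlinarith [(abs_nonneg δ).trans_lt hδ]

/-- Each step divides the accumulated error by `m p ≥ 2` and adds an error below `μ`, so the
error stays below `(μ + μ) / 2 = μ` without summing a geometric series. -/
theorem abs_prod_inv_sub_lt {μ : ℝ} {m x : ℕ → ℝ} {n : ℕ} (hx₀ : x 0 = 1)
    (hm : ∀ p < n, 2 ≤ m p) (herr : ∀ p < n, |x p - m p * x (p + 1)| < μ) (hn : 0 < n) :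
    |∏ i ∈ range n, (m i)⁻¹ - x n| < μ := by
  have hstep (p : ℕ) (hp : p < n) (he : |∏ i ∈ range p, (m i)⁻¹ - x p| ≤ μ) :
      |∏ i ∈ range (p + 1), (m i)⁻¹ - x (p + 1)| < μ := by
    have hmp : m p ≠ 0 := by linarith [hm p hp]
    have herror : ∏ i ∈ range (p + 1), (m i)⁻¹ - x (p + 1)
        = ((∏ i ∈ range p, (m i)⁻¹ - x p) + (x p - m p * x (p + 1))) / m p := by
      rw [prod_range_succ]
      field_simp
      ring
    rw [herror]
    exact abs_add_div_lt (hm p hp) he (herr p hp)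
  suffices ∀ p < n, |∏ i ∈ range (p + 1), (m i)⁻¹ - x (p + 1)| < μ by
    simpa [Nat.sub_add_cancel hn] using this (n - 1) (by omega)
  intro p hp
  induction p with
  | zero => exact hstep 0 hp (by simpa [hx₀] using (abs_nonneg _).trans (herr 0 hp).le)
  | succ p ih => exact hstep (p + 1) hp (ih (by omega)).le

theorem stmt_13_general (k : ℕ) (hk : k = 1 ∨ k = 2) (μ : ℝ)
    (P : ℕ) (hP : 2 ≤ P) (kq : ℕ → ℕ)
    (hkq : ∀ q, 1 ≤ q → q ≤ P - 1 → kq q = 4 - k ∨ kq q = 5)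
    (a : ℕ → ℝ) (haP : a P = 1)
    (herr : ∀ q, 1 ≤ q → q ≤ P - 1 → |a (q + 1) - (kq q : ℝ) * a q| < μ) :
    |(∏ q ∈ Finset.Icc 1 (P - 1), 1 / ((kq (P - q) : ℝ))) - a 1| < μ := by
  have hprod : ∏ q ∈ Icc 1 (P - 1), 1 / (kq (P - q) : ℝ)
      = ∏ i ∈ range (P - 1), ((kq (P - 1 - i) : ℝ))⁻¹ := by
    rw [← Ico_add_one_right_eq_Icc, range_eq_Ico, ← zero_add 1, ← prod_Ico_add']
    simp only [one_div, Nat.sub_sub, add_comm]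
  have hmult (p : ℕ) (hp : p < P - 1) : 2 ≤ (kq (P - 1 - p) : ℝ) := by
    have := hkq (P - 1 - p) (by omega) (by omega)
    norm_cast
    omega
  have hstep (p : ℕ) (hp : p < P - 1) :
      |a (P - p) - kq (P - 1 - p) * a (P - (p + 1))| < μ := by
    have := herr (P - 1 - p) (by omega) (by omega)
    rw [show P - (p + 1) = P - 1 - p by omega]
    rwa [show P - 1 - p + 1 = P - p by omega] at this
  have hbound := abs_prod_inv_sub_lt (x := fun p ↦ a (P - p)) (by simpa) hmult hstep (by omega)
  rw [hprod]
  rwa [show P - (P - 1) = 1 by omega] at hbound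

theorem stmt_13 (k : ℕ) (hk : k = 1 ∨ k = 2) (μ : ℝ) (hμ : 0 < μ)
    (P : ℕ) (hP : 2 ≤ P) (kq : ℕ → ℕ)
    (hkq : ∀ q, 1 ≤ q → q ≤ P - 1 → kq q = 4 - k ∨ kq q = 5)
    (a : ℕ → ℝ) (haP : a P = 1)
    (herr : ∀ q, 1 ≤ q → q ≤ P - 1 → |a (q + 1) - (kq q : ℝ) * a q| < μ) :
    |(∏ q ∈ Finset.Icc 1 (P - 1), 1 / ((kq (P - q) : ℝ))) - a 1| < μ :=
  stmt_13_general k hk μ P hP kq hkq a haP herr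
end

section
/- Let c, d, n, c', d', n' be natural numbers with c + d ≤ n and c' + d' ≤ n' and (c,d,n) ≠ (c',d',n'). If moreover a rational a satisfies |a - (1 - 1/(2^c 3^d 5^n))| ≤ 1/(12*30^(5*N)) for some N ≥ max(n, n'), then |a - (1 - 1/(2^{c'} 3^{d'} 5^{n'}))| > 1/(12*30^(5*N)). -/
/-!
Write `D = 2^c 3^d 5^n` and `D' = 2^c' 3^d' 5^n'`. Unique factorisation makes `D ≠ D'`, and
`c + d ≤ n ≤ N` gives `D ≤ 30^N`, likewise `D' ≤ 30^N`. Hence the two encodings `1 - 1/D` and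
`1 - 1/D'` are at distance `|D' - D| / (D D') ≥ 1/30^(2N)`, which exceeds twice the tolerance
`1/(12·30^(5N))`; so `a` cannot be within the tolerance of both.
-/

lemma two_pow_mul_three_pow_mul_five_pow_injective {c d n c' d' n' : ℕ}
    (h : 2 ^ c * 3 ^ d * 5 ^ n = 2 ^ c' * 3 ^ d' * 5 ^ n') : (c, d, n) = (c', d', n') := by
  have hv (p : ℕ) := congrArg (fun m => m.factorization p) h
  simpa [Nat.factorization_mul, Nat.factorization_pow, Nat.prime_two.factorization,
    Nat.prime_three.factorization, Nat.prime_five.factorization]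
    using And.intro (hv 2) (And.intro (hv 3) (hv 5))

lemma two_pow_mul_three_pow_mul_five_pow_le {c d n : ℕ} (h : c + d ≤ n) :
    2 ^ c * 3 ^ d * 5 ^ n ≤ 30 ^ n :=
  calc 2 ^ c * 3 ^ d * 5 ^ n ≤ 2 ^ n * 3 ^ n * 5 ^ n := by gcongr <;> omega
    _ = 30 ^ n := by rw [← mul_pow, ← mul_pow]; norm_num

lemma one_div_sq_le_abs_inv_sub_inv {K : Type*} [Field K] [LinearOrder K] [IsStrictOrderedRing K]
    {m n M : ℕ} (hm : 0 < m) (hn : 0 < n) (hmn : m ≠ n) (hmM : m ≤ M) (hnM : n ≤ M) :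
    1 / (M : K) ^ 2 ≤ |(m : K)⁻¹ - (n : K)⁻¹| := by
  have hm' : (0 : K) < m := by exact_mod_cast hm
  have hn' : (0 : K) < n := by exact_mod_cast hn
  have hnum : (1 : K) ≤ |(n : K) - m| := by
    have : (1 : ℤ) ≤ |(n : ℤ) - m| := Int.one_le_abs (by omega)
    exact_mod_cast this
  have hden : (m : K) * n ≤ (M : K) ^ 2 := by
    rw [sq]; gcongr
  calc 1 / (M : K) ^ 2 ≤ 1 / ((m : K) * n) := one_div_le_one_div_of_le (by positivity) hden
    _ ≤ |(n : K) - m| / ((m : K) * n) := by gcongr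
    _ = |(m : K)⁻¹ - (n : K)⁻¹| := by
      rw [inv_sub_inv hm'.ne' hn'.ne', abs_div, abs_of_pos (mul_pos hm' hn')]

lemma lt_abs_sub_of_abs_sub_le {α : Type*} [AddCommGroup α] [LinearOrder α]
    [IsOrderedAddMonoid α] {a x y ε δ : α}
    (hxy : δ ≤ |x - y|) (hεδ : ε + ε < δ) (ha : |a - x| ≤ ε) : ε < |a - y| := by
  refine lt_of_add_lt_add_left (a := ε) ?_
  calc ε + ε < δ := hεδ
    _ ≤ |x - y| := hxy
    _ ≤ |a - x| + |a - y| := abs_sub_comm x a ▸ abs_sub_le x a y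
    _ ≤ ε + |a - y| := by gcongr

theorem stmt_15 (c d n c' d' n' N : ℕ)
    (h1 : c + d ≤ n) (h2 : c' + d' ≤ n') (hne : (c, d, n) ≠ (c', d', n'))
    (hN : n ≤ N) (hN' : n' ≤ N) (a : ℚ)
    (ha : |a - (1 - 1 / ((2 : ℚ) ^ c * 3 ^ d * 5 ^ n))| ≤ 1 / (12 * 30 ^ (5 * N))) :
    |a - (1 - 1 / ((2 : ℚ) ^ c' * 3 ^ d' * 5 ^ n'))| > 1 / (12 * 30 ^ (5 * N)) := by
  have hle : 2 ^ c * 3 ^ d * 5 ^ n ≤ 30 ^ N :=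
    (two_pow_mul_three_pow_mul_five_pow_le h1).trans (Nat.pow_le_pow_right (by norm_num) hN)
  have hle' : 2 ^ c' * 3 ^ d' * 5 ^ n' ≤ 30 ^ N :=
    (two_pow_mul_three_pow_mul_five_pow_le h2).trans (Nat.pow_le_pow_right (by norm_num) hN')
  have hgap := one_div_sq_le_abs_inv_sub_inv (K := ℚ) (by positivity) (by positivity)
    (mt two_pow_mul_three_pow_mul_five_pow_injective hne.symm) hle' hle
  push_cast at hgap
  rw [← one_div, ← one_div, ← sub_sub_sub_cancel_left _ _ 1] at hgap
  refine lt_abs_sub_of_abs_sub_le hgap ?_ ha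
  have h30 : ((30 : ℚ) ^ N) ^ 2 ≤ 30 ^ (5 * N) := by
    rw [← pow_mul]; exact pow_le_pow_right₀ (by norm_num) (by omega)
  calc 1 / (12 * 30 ^ (5 * N)) + 1 / (12 * 30 ^ (5 * N)) = 1 / (6 * (30 : ℚ) ^ (5 * N)) := by
        ring
    _ ≤ 1 / (6 * ((30 : ℚ) ^ N) ^ 2) := by gcongr
    _ < 1 / ((30 : ℚ) ^ N) ^ 2 := by
        gcongr; linarith [pow_pos (pow_pos (by norm_num : (0 : ℚ) < 30) N) 2]
end
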